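/- For the decomposition of the one-dimensional Fermi-Hubbard Hamiltonian, [H_2, [H_3, H_1]] = v²u Σ_{i∈Λ'} Σ_{σ∈{↑,↓}} ( (h_{i−1,i+1,σ} − h_{i,i+2,σ}) · (n_{i,σ̄} − n_{i+1,σ̄}) + h̃_{i−1,i,σ} · h̃_{i,i+1,σ̄} + h̃_{i,i+1,σ} · h̃_{i+1,i+2,σ̄} ), and [H_3, [H_3, H_1]] = vu² Σ_{i∈Λ'} Σ_{σ∈{↑,↓}} h_{i,i+1,σ} · (n_{i,σ̄} − n_{i+1,σ̄})², where σ̄ denotes the flipped spin. -/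

import Mathlib

/-- The hopping term `h_{ijσ} = a_{iσ}† a_{jσ} + a_{jσ}† a_{iσ}`. -/
noncomputable def hop {E : Type*} [NormedAddCommGroup E] [InnerProductSpace ℂ E]
    [CompleteSpace E] {Λ : Type*} (a : Λ → Bool → E →L[ℂ] E) (i j : Λ) (σ : Bool) :
    E →L[ℂ] E :=
  star (a i σ) * a j σ + star (a j σ) * a i σ

/-- The signed hopping term `h̃_{ijσ} = a_{iσ}† a_{jσ} − a_{jσ}† a_{iσ}`. -/
noncomputable def shop {E : Type*} [NormedAddCommGroup E] [InnerProductSpace ℂ E]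
    [CompleteSpace E] {Λ : Type*} (a : Λ → Bool → E →L[ℂ] E) (i j : Λ) (σ : Bool) :
    E →L[ℂ] E :=
  star (a i σ) * a j σ - star (a j σ) * a i σ

/-- The number operator `n_{iσ} = a_{iσ}† a_{iσ}`. -/
noncomputable def num {E : Type*} [NormedAddCommGroup E] [InnerProductSpace ℂ E]
    [CompleteSpace E] {Λ : Type*} (a : Λ → Bool → E →L[ℂ] E) (i : Λ) (σ : Bool) :
    E →L[ℂ] E :=
  star (a i σ) * a i σ

/-- The "even-odd" kinetic term `H₁ = v Σ_{i∈Λ'} Σ_σ h_{i,i+1,σ}` of the one-dimensional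
Fermi-Hubbard Hamiltonian, with `Λ' = {0, 2, …, L−2} ⊂ ℤ/Lℤ` and spin `↑ = true`, `↓ = false`. -/
noncomputable def FH1 {E : Type*} [NormedAddCommGroup E] [InnerProductSpace ℂ E]
    [CompleteSpace E] {L : ℕ} (a : ZMod L → Bool → E →L[ℂ] E) (v : ℝ) : E →L[ℂ] E :=
  (v : ℂ) • ∑ i ∈ Finset.range (L / 2), ∑ σ : Bool,
    hop a ((2 * i : ℕ) : ZMod L) (((2 * i : ℕ) : ZMod L) + 1) σ

/-- The "odd-even" kinetic term `H₂ = v Σ_{i∈Λ'} Σ_σ h_{i−1,i,σ}`. -/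
noncomputable def FH2 {E : Type*} [NormedAddCommGroup E] [InnerProductSpace ℂ E]
    [CompleteSpace E] {L : ℕ} (a : ZMod L → Bool → E →L[ℂ] E) (v : ℝ) : E →L[ℂ] E :=
  (v : ℂ) • ∑ i ∈ Finset.range (L / 2), ∑ σ : Bool,
    hop a (((2 * i : ℕ) : ZMod L) - 1) ((2 * i : ℕ) : ZMod L) σ

/-- The interaction term `H₃ = u Σ_{i∈Λ'} (n_{i↑}n_{i↓} + n_{i+1,↑}n_{i+1,↓})`. -/
noncomputable def FH3 {E : Type*} [NormedAddCommGroup E] [InnerProductSpace ℂ E]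
    [CompleteSpace E] {L : ℕ} (a : ZMod L → Bool → E →L[ℂ] E) (u : ℝ) : E →L[ℂ] E :=
  (u : ℂ) • ∑ i ∈ Finset.range (L / 2),
    (num a ((2 * i : ℕ) : ZMod L) true * num a ((2 * i : ℕ) : ZMod L) false +
      num a (((2 * i : ℕ) : ZMod L) + 1) true * num a (((2 * i : ℕ) : ZMod L) + 1) false)

/-!
The canonical anticommutation relations give, for bilinears `c†_p c_q`,
`[c†_p c_q, c†_r c_s] = δ_qr c†_p c_s - δ_sp c†_r c_q`, so operators built from bilinears in
disjoint sets of modes commute. All three terms `H₁, H₂, H₃` are sums of such operators on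
bonds, and in each double sum over bonds only overlapping bonds interact: for `[H₃, ·]` only
the bond `(i, i+1)` itself, for `[H₂, ·]` the two odd bonds `(i-1, i)` and `(i+1, i+2)` that
touch it (the second one is indexed by the next block, cyclically). What remains is a
finite computation with the commutation rule on at most four sites.
-/

open Finset Function

section

attribute [local instance 100] LieRing.ofAssociativeRing

namespace Ring

variable {R : Type*} [Ring R]

theorem mul_lie (x y z : R) : ⁅x * y, z⁆ = x * ⁅y, z⁆ + ⁅x, z⁆ * y := by
  simp only [lie_def]; noncomm_ring

theorem lie_mul (x y z : R) : ⁅x, y * z⁆ = y * ⁅x, z⁆ + ⁅x, y⁆ * z := by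
  simp only [lie_def]; noncomm_ring

end Ring

section LieSums

variable {M ι : Type*} [LieRing M] (s : Finset ι) (f g : ι → M)

theorem sum_lie_sum_of_lie_eq_zero (h : ∀ i ∈ s, ∀ j ∈ s, j ≠ i → ⁅f j, g i⁆ = 0) :
    ⁅∑ i ∈ s, f i, ∑ i ∈ s, g i⁆ = ∑ i ∈ s, ⁅f i, g i⁆ := by
  rw [sum_lie_sum, Finset.sum_comm]
  exact Finset.sum_congr rfl fun i hi =>
    Finset.sum_eq_single_of_mem i hi fun j hj hji => h i hi j hj hji

theorem sum_lie_sum_of_lie_eq_zero_of_ne_next {next : ι → ι}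
    (hnext : ∀ i ∈ s, next i ∈ s ∧ next i ≠ i)
    (h : ∀ i ∈ s, ∀ j ∈ s, j ≠ i → j ≠ next i → ⁅f j, g i⁆ = 0) :
    ⁅∑ i ∈ s, f i, ∑ i ∈ s, g i⁆ = ∑ i ∈ s, (⁅f i, g i⁆ + ⁅f (next i), g i⁆) := by
  rw [sum_lie_sum, Finset.sum_comm]
  exact Finset.sum_congr rfl fun i hi =>
    Finset.sum_eq_add_of_mem i (next i) hi (hnext i hi).1 (hnext i hi).2.symm
      fun j hj hji => h i hi j hj hji.1 hji.2

end LieSums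

section CAR

variable {A ι : Type*} [Ring A] [StarRing A]

-- A definition rather than a product, so that the Leibniz rules `Ring.mul_lie`, `Ring.lie_mul`
-- leave it intact when expanding commutators.
def bilinear (c : ι → A) (p q : ι) : A := star (c p) * c q

def bilinearSubring (c : ι → A) (S : Set ι) : Subring A :=
  Subring.closure (Set.image2 (bilinear c) S S)

theorem bilinear_mem_bilinearSubring {c : ι → A} {S : Set ι} {p q : ι} (hp : p ∈ S)
    (hq : q ∈ S) :
    bilinear c p q ∈ bilinearSubring c S :=
  Subring.subset_closure (Set.mem_image2_of_mem hp hq)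

variable [DecidableEq ι]

structure IsCAR (c : ι → A) : Prop where
  anticomm : ∀ p q, c p * c q + c q * c p = 0
  anticomm_star : ∀ p q, c p * star (c q) + star (c q) * c p = if p = q then 1 else 0

variable {c : ι → A}

theorem IsCAR.lie_bilinear (hc : IsCAR c) (p q r s : ι) :
    ⁅bilinear c p q, bilinear c r s⁆
      = (if q = r then bilinear c p s else 0) - (if s = p then bilinear c r q else 0) := by
  have hqr : c q * star (c r) = (if q = r then 1 else 0) - star (c r) * c q :=
    eq_sub_of_add_eq (hc.anticomm_star q r)
  have hsp : c s * star (c p) = (if s = p then 1 else 0) - star (c p) * c s :=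
    eq_sub_of_add_eq (hc.anticomm_star s p)
  have hqs : c q * c s = -(c s * c q) := eq_neg_of_add_eq_zero_left (hc.anticomm q s)
  have hpr : star (c p) * star (c r) = -(star (c r) * star (c p)) := by
    refine eq_neg_of_add_eq_zero_left ?_
    simpa only [star_add, star_mul, star_zero] using congrArg star (hc.anticomm r p)
  -- the two quartic terms left after normal ordering cancel by the two anticommutations
  have quartic : star (c p) * (star (c r) * c q) * c s
      = star (c r) * (star (c p) * c s) * c q := by
    calc star (c p) * (star (c r) * c q) * c s
        = (star (c p) * star (c r)) * (c q * c s) := by noncomm_ring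
      _ = star (c r) * (star (c p) * c s) * c q := by rw [hpr, hqs]; noncomm_ring
  calc ⁅bilinear c p q, bilinear c r s⁆
      = star (c p) * (c q * star (c r)) * c s - star (c r) * (c s * star (c p)) * c q := by
        simp only [bilinear, Ring.lie_def]; noncomm_ring
    _ = star (c p) * (if q = r then 1 else 0) * c s
          - star (c r) * (if s = p then 1 else 0) * c q
          - (star (c p) * (star (c r) * c q) * c s - star (c r) * (star (c p) * c s) * c q) := by
        rw [hqr, hsp]; noncomm_ring
    _ = _ := by rw [quartic, sub_self, sub_zero]; split_ifs <;> simp [bilinear]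

theorem IsCAR.commute_bilinear (hc : IsCAR c) {p q r s : ι} (hqr : q ≠ r) (hsp : s ≠ p) :
    Commute (bilinear c p q) (bilinear c r s) := by
  have h := hc.lie_bilinear p q r s
  rwa [if_neg hqr, if_neg hsp, sub_zero, Ring.lie_def, sub_eq_zero] at h

theorem IsCAR.commute_of_mem_bilinearSubring (hc : IsCAR c) {S T : Set ι} (hST : Disjoint S T)
    {x y : A} (hx : x ∈ bilinearSubring c S) (hy : y ∈ bilinearSubring c T) : Commute x y := by
  have hxT : x ∈ Subring.centralizer (Set.image2 (bilinear c) T T) := by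
    refine Subring.closure_le.mpr ?_ hx
    rintro _ ⟨p, hp, q, hq, rfl⟩ _ ⟨r, hr, s, hs, rfl⟩
    exact (hc.commute_bilinear (hST.ne_of_mem hq hr) (hST.ne_of_mem hp hs).symm).eq.symm
  have hyx : y ∈ Subring.centralizer {x} := by
    refine Subring.closure_le.mpr ?_ hy
    rintro _ hg _ rfl
    exact (hxT _ hg).symm
  exact hyx x rfl

theorem isCAR_uncurry {Λ κ : Type*} [DecidableEq Λ] [DecidableEq κ] {a : Λ → κ → A}
    (anticomm : ∀ i j σ τ, a i σ * a j τ + a j τ * a i σ = 0)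
    (anticomm_star : ∀ i j σ τ,
      a i σ * star (a j τ) + star (a j τ) * a i σ = if i = j ∧ σ = τ then 1 else 0) :
    IsCAR (uncurry a) where
  anticomm p q := anticomm p.1 q.1 p.2 q.2
  anticomm_star := fun (i, σ) (j, τ) => by
    simpa only [uncurry_apply_pair, Prod.mk.injEq] using anticomm_star i j σ τ

end CAR

section Lattice

variable {L : ℕ}

theorem natCast_inj_of_lt {p q : ℕ} (hp : p < L) (hq : q < L) :
    (p : ZMod L) = q ↔ p = q := by
  rw [ZMod.natCast_eq_natCast_iff', Nat.mod_eq_of_lt hp, Nat.mod_eq_of_lt hq]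

theorem disjoint_evenBonds {i j : ℕ} (hi : i < L / 2) (hj : j < L / 2) (hji : j ≠ i) :
    Disjoint ({((2 * j : ℕ) : ZMod L), ((2 * j : ℕ) : ZMod L) + 1} : Set (ZMod L))
      {((2 * i : ℕ) : ZMod L), ((2 * i : ℕ) : ZMod L) + 1} := by
  have cast_ne (p q : ℕ) (hp : p < L) (hq : q < L) (hpq : p ≠ q) : (p : ZMod L) ≠ q :=
    (natCast_inj_of_lt hp hq).not.mpr hpq
  simp only [← Nat.cast_succ, Set.disjoint_insert_left, Set.disjoint_singleton_left,
    Set.mem_insert_iff, Set.mem_singleton_iff, not_or]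
  refine ⟨⟨?_, ?_⟩, ?_, ?_⟩ <;> exact cast_ne _ _ (by omega) (by omega) (by omega)

theorem natCast_two_mul_ne_add_one {i : ℕ} (hi : i < L / 2) :
    ((2 * i : ℕ) : ZMod L) ≠ ((2 * i : ℕ) : ZMod L) + 1 := by
  rw [← Nat.cast_succ]
  exact (natCast_inj_of_lt (by omega) (by omega)).not.mpr (by omega)

theorem natCast_two_mul_succ_mod (hL : Even L) (i : ℕ) (hi : i < L / 2) :
    ((2 * ((i + 1) % (L / 2)) : ℕ) : ZMod L) = ((2 * i : ℕ) : ZMod L) + 2 := by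
  rcases Nat.lt_or_ge (i + 1) (L / 2) with h | h
  · rw [Nat.mod_eq_of_lt h]; push_cast; ring
  · have hwrap : 2 * i + 2 = L := by obtain ⟨k, hk⟩ := hL; omega
    rw [show i + 1 = L / 2 by omega, Nat.mod_self, mul_zero, Nat.cast_zero, ← ZMod.natCast_self,
      ← hwrap]
    push_cast; ring

theorem succ_mod_ne_self {N i : ℕ} (hN : 2 ≤ N) (hi : i < N) : (i + 1) % N ≠ i := by
  rcases Nat.lt_or_ge (i + 1) N with h | h
  · rw [Nat.mod_eq_of_lt h]; omega
  · rw [show i + 1 = N by omega, Nat.mod_self]; omega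

theorem add_natCast_ne_add_natCast (t : ZMod L) {k l : ℕ} (hkl : k < l) (hl : l < L) :
    t + k ≠ t + l :=
  fun h => hkl.ne ((natCast_inj_of_lt (hkl.trans hl) hl).mp (add_left_cancel h))

theorem disjoint_oddBond_evenBond (hL : Even L) {i j : ℕ} (hi : i < L / 2) (hj : j < L / 2)
    (hji : j ≠ i) (hj_next : j ≠ (i + 1) % (L / 2)) :
    Disjoint ({((2 * j : ℕ) : ZMod L) - 1, ((2 * j : ℕ) : ZMod L)} : Set (ZMod L))
      {((2 * i : ℕ) : ZMod L), ((2 * i : ℕ) : ZMod L) + 1} := by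
  have hnext : (i + 1) % (L / 2) < L / 2 := Nat.mod_lt _ (by omega)
  have hj_even : ((2 * j : ℕ) : ZMod L) ∉
      ({((2 * i : ℕ) : ZMod L), ((2 * i : ℕ) : ZMod L) + 1} : Set (ZMod L)) :=
    (disjoint_evenBonds hi hj hji).notMem_of_mem_left (Set.mem_insert _ _)
  have hj_two : ((2 * j : ℕ) : ZMod L) ≠ ((2 * i : ℕ) : ZMod L) + 2 := by
    rw [← natCast_two_mul_succ_mod hL i hi]
    exact fun h => hj_next (by have := (natCast_inj_of_lt (by omega) (by omega)).mp h; omega)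
  simp only [Set.disjoint_insert_left, Set.disjoint_singleton_left, Set.mem_insert_iff,
    Set.mem_singleton_iff, not_or] at hj_even ⊢
  exact ⟨⟨fun h => hj_even.2 (by linear_combination h),
    fun h => hj_two (by linear_combination h)⟩, hj_even⟩

end Lattice

section Bond

variable {E : Type*} [NormedAddCommGroup E] [InnerProductSpace ℂ E] [CompleteSpace E]
  {Λ : Type*} (a : Λ → Bool → E →L[ℂ] E)

noncomputable def bondHop (x y : Λ) : E →L[ℂ] E := ∑ σ : Bool, hop a x y σ

noncomputable def bondInteraction (x y : Λ) : E →L[ℂ] E :=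
  num a x true * num a x false + num a y true * num a y false

noncomputable def bondCorrelatedHop (x y : Λ) : E →L[ℂ] E :=
  ∑ σ : Bool, shop a x y σ * (num a x (!σ) - num a y (!σ))

variable {a}

theorem hop_eq_bilinear (x y : Λ) (σ : Bool) :
    hop a x y σ = bilinear (uncurry a) (x, σ) (y, σ) + bilinear (uncurry a) (y, σ) (x, σ) := rfl

theorem shop_eq_bilinear (x y : Λ) (σ : Bool) :
    shop a x y σ = bilinear (uncurry a) (x, σ) (y, σ) - bilinear (uncurry a) (y, σ) (x, σ) := rfl

theorem num_eq_bilinear (x : Λ) (σ : Bool) : num a x σ = bilinear (uncurry a) (x, σ) (x, σ) := rfl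

section Membership

variable {S : Set (Λ × Bool)} {x y : Λ}

theorem num_mem_bilinearSubring {σ : Bool} (hx : (x, σ) ∈ S) :
    num a x σ ∈ bilinearSubring (uncurry a) S := by
  rw [num_eq_bilinear]; exact bilinear_mem_bilinearSubring hx hx

theorem hop_mem_bilinearSubring {σ : Bool} (hx : (x, σ) ∈ S) (hy : (y, σ) ∈ S) :
    hop a x y σ ∈ bilinearSubring (uncurry a) S := by
  rw [hop_eq_bilinear]
  exact add_mem (bilinear_mem_bilinearSubring hx hy) (bilinear_mem_bilinearSubring hy hx)

theorem shop_mem_bilinearSubring {σ : Bool} (hx : (x, σ) ∈ S) (hy : (y, σ) ∈ S) :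
    shop a x y σ ∈ bilinearSubring (uncurry a) S := by
  rw [shop_eq_bilinear]
  exact sub_mem (bilinear_mem_bilinearSubring hx hy) (bilinear_mem_bilinearSubring hy hx)

variable (hx : ∀ σ, (x, σ) ∈ S) (hy : ∀ σ, (y, σ) ∈ S)
include hx hy

theorem bondHop_mem_bilinearSubring : bondHop a x y ∈ bilinearSubring (uncurry a) S :=
  sum_mem fun σ _ => hop_mem_bilinearSubring (hx σ) (hy σ)

theorem bondInteraction_mem_bilinearSubring :
    bondInteraction a x y ∈ bilinearSubring (uncurry a) S :=
  add_mem (mul_mem (num_mem_bilinearSubring (hx _)) (num_mem_bilinearSubring (hx _)))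
    (mul_mem (num_mem_bilinearSubring (hy _)) (num_mem_bilinearSubring (hy _)))

theorem bondCorrelatedHop_mem_bilinearSubring :
    bondCorrelatedHop a x y ∈ bilinearSubring (uncurry a) S :=
  sum_mem fun σ _ => mul_mem (shop_mem_bilinearSubring (hx σ) (hy σ))
    (sub_mem (num_mem_bilinearSubring (hx _)) (num_mem_bilinearSubring (hy _)))

end Membership

variable [DecidableEq Λ] (ha : IsCAR (uncurry a))
include ha

theorem lie_eq_zero_of_disjoint_sites {s t : Set Λ} (hst : Disjoint s t) {X Y : E →L[ℂ] E}
    (hX : X ∈ bilinearSubring (uncurry a) (Prod.fst ⁻¹' s))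
    (hY : Y ∈ bilinearSubring (uncurry a) (Prod.fst ⁻¹' t)) : ⁅X, Y⁆ = 0 :=
  (ha.commute_of_mem_bilinearSubring (hst.preimage _) hX hY).lie_eq

theorem commute_of_ne_spin {σ τ : Bool} (hστ : σ ≠ τ) {X Y : E →L[ℂ] E}
    (hX : X ∈ bilinearSubring (uncurry a) (Prod.snd ⁻¹' {σ}))
    (hY : Y ∈ bilinearSubring (uncurry a) (Prod.snd ⁻¹' {τ})) : Commute X Y :=
  ha.commute_of_mem_bilinearSubring (Set.disjoint_singleton.mpr hστ |>.preimage _) hX hY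

variable {x y : Λ}

theorem bondInteraction_lie_bondHop (hxy : x ≠ y) :
    ⁅bondInteraction a x y, bondHop a x y⁆ = bondCorrelatedHop a x y := by
  have swap : Commute (num a x true - num a y true) (shop a x y false) :=
    commute_of_ne_spin ha (σ := true) (τ := false) (by decide)
      (sub_mem (num_mem_bilinearSubring rfl) (num_mem_bilinearSubring rfl))
      (shop_mem_bilinearSubring rfl rfl)
  simp only [bondInteraction, bondHop, bondCorrelatedHop, Fintype.sum_bool, Bool.not_true,
    Bool.not_false]
  rw [← swap.eq]
  simp only [hop_eq_bilinear, shop_eq_bilinear, num_eq_bilinear, Ring.mul_lie, add_lie, lie_add,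
    ha.lie_bilinear, Prod.mk.injEq, hxy, hxy.symm, Bool.true_eq_false, Bool.false_eq_true,
    and_true, and_false, and_self, if_true, if_false, mul_sub, sub_mul, mul_zero, zero_mul]
  abel

theorem bondHop_left_lie_bondCorrelatedHop {w x y : Λ} (hwx : w ≠ x) (hwy : w ≠ y)
    (hxy : x ≠ y) :
    ⁅bondHop a w x, bondCorrelatedHop a x y⁆
      = ∑ σ : Bool,
          (hop a w y σ * (num a x (!σ) - num a y (!σ)) + shop a w x σ * shop a x y (!σ)) := by
  have swap_up : Commute (shop a w x true) (shop a x y false) :=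
    commute_of_ne_spin ha (σ := true) (τ := false) (by decide)
      (shop_mem_bilinearSubring rfl rfl) (shop_mem_bilinearSubring rfl rfl)
  have swap_down : Commute (shop a w x false) (shop a x y true) :=
    commute_of_ne_spin ha (σ := false) (τ := true) (by decide)
      (shop_mem_bilinearSubring rfl rfl) (shop_mem_bilinearSubring rfl rfl)
  simp only [bondHop, bondCorrelatedHop, Fintype.sum_bool, Bool.not_true, Bool.not_false]
  rw [swap_up.eq, swap_down.eq]
  simp only [hop_eq_bilinear, shop_eq_bilinear, num_eq_bilinear, Ring.lie_mul, add_lie, lie_add,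
    lie_sub, ha.lie_bilinear, Prod.mk.injEq, hwx, hwy, hxy, hwx.symm, hwy.symm, hxy.symm,
    Bool.true_eq_false, Bool.false_eq_true, and_true, and_false, and_self, if_true, if_false,
    mul_add, add_mul, mul_sub, sub_mul, mul_zero, zero_mul]
  abel

theorem bondHop_right_lie_bondCorrelatedHop {x y z : Λ} (hxy : x ≠ y) (hxz : x ≠ z)
    (hyz : y ≠ z) :
    ⁅bondHop a y z, bondCorrelatedHop a x y⁆
      = ∑ σ : Bool,
          (shop a x y σ * shop a y z (!σ) - hop a x z σ * (num a x (!σ) - num a y (!σ))) := by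
  simp only [bondHop, bondCorrelatedHop, Fintype.sum_bool, Bool.not_true, Bool.not_false]
  simp only [hop_eq_bilinear, shop_eq_bilinear, num_eq_bilinear, Ring.lie_mul, add_lie, lie_add,
    lie_sub, ha.lie_bilinear, Prod.mk.injEq, hxy, hxz, hyz, hxy.symm, hxz.symm, hyz.symm,
    Bool.true_eq_false, Bool.false_eq_true, and_true, and_false, and_self, if_true, if_false,
    mul_add, add_mul, mul_sub, sub_mul, mul_zero, zero_mul]
  abel

theorem bondInteraction_lie_bondCorrelatedHop {x y : Λ} (hxy : x ≠ y) :
    ⁅bondInteraction a x y, bondCorrelatedHop a x y⁆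
      = ∑ σ : Bool, hop a x y σ * (num a x (!σ) - num a y (!σ)) ^ 2 := by
  have swap : Commute (num a x true - num a y true) (hop a x y false) :=
    commute_of_ne_spin ha (σ := true) (τ := false) (by decide)
      (sub_mem (num_mem_bilinearSubring rfl) (num_mem_bilinearSubring rfl))
      (hop_mem_bilinearSubring rfl rfl)
  simp only [bondInteraction, bondCorrelatedHop, Fintype.sum_bool, Bool.not_true, Bool.not_false,
    pow_two]
  rw [← mul_assoc (hop a x y true), ← mul_assoc (hop a x y false), ← swap.eq]
  simp only [hop_eq_bilinear, shop_eq_bilinear, num_eq_bilinear, Ring.mul_lie, Ring.lie_mul,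
    add_lie, lie_add, lie_sub, lie_self, ha.lie_bilinear, Prod.mk.injEq, hxy, hxy.symm,
    Bool.true_eq_false, Bool.false_eq_true, and_true, and_false, and_self, if_true, if_false,
    mul_add, add_mul, mul_sub, sub_mul, mul_zero, zero_mul, mul_assoc]
  abel

end Bond

section FermiHubbard

variable {E : Type*} [NormedAddCommGroup E] [InnerProductSpace ℂ E] [CompleteSpace E] {L : ℕ}
  {a : ZMod L → Bool → E →L[ℂ] E}

theorem FH1_eq (v : ℝ) :
    FH1 a v = (v : ℂ) • ∑ i ∈ range (L / 2),
      bondHop a ((2 * i : ℕ) : ZMod L) (((2 * i : ℕ) : ZMod L) + 1) := rfl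

theorem FH2_eq (v : ℝ) :
    FH2 a v = (v : ℂ) • ∑ i ∈ range (L / 2),
      bondHop a (((2 * i : ℕ) : ZMod L) - 1) ((2 * i : ℕ) : ZMod L) := rfl

theorem FH3_eq (u : ℝ) :
    FH3 a u = (u : ℂ) • ∑ i ∈ range (L / 2),
      bondInteraction a ((2 * i : ℕ) : ZMod L) (((2 * i : ℕ) : ZMod L) + 1) := rfl

variable (ha : IsCAR (uncurry a))
include ha

theorem bondHop_neighbours_lie_bondCorrelatedHop (hL4 : 4 ≤ L) (t : ZMod L) :
    ⁅bondHop a (t - 1) t, bondCorrelatedHop a t (t + 1)⁆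
        + ⁅bondHop a (t + 1) (t + 2), bondCorrelatedHop a t (t + 1)⁆
      = ∑ σ : Bool,
          ((hop a (t - 1) (t + 1) σ - hop a t (t + 2) σ) * (num a t (!σ) - num a (t + 1) (!σ))
            + shop a (t - 1) t σ * shop a t (t + 1) (!σ)
            + shop a t (t + 1) σ * shop a (t + 1) (t + 2) (!σ)) := by
  have hne (k l : ℕ) (hkl : k < l) (hl : l < L) : t - 1 + k ≠ t - 1 + l :=
    add_natCast_ne_add_natCast (t - 1) hkl hl
  have h01 : t - 1 ≠ t := fun h =>
    hne 0 1 (by omega) (by omega) (by push_cast; linear_combination h)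
  have h02 : t - 1 ≠ t + 1 := fun h =>
    hne 0 2 (by omega) (by omega) (by push_cast; linear_combination h)
  have h12 : t ≠ t + 1 := fun h =>
    hne 1 2 (by omega) (by omega) (by push_cast; linear_combination h)
  have h13 : t ≠ t + 2 := fun h =>
    hne 1 3 (by omega) (by omega) (by push_cast; linear_combination h)
  have h23 : t + 1 ≠ t + 2 := fun h =>
    hne 2 3 (by omega) (by omega) (by push_cast; linear_combination h)
  rw [bondHop_left_lie_bondCorrelatedHop ha h01 h02 h12,
    bondHop_right_lie_bondCorrelatedHop ha h12 h13 h23, ← sum_add_distrib]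
  exact Finset.sum_congr rfl fun σ _ => by rw [sub_mul]; abel

theorem FH3_lie_FH1 (u v : ℝ) :
    ⁅FH3 a u, FH1 a v⁆ = ((u : ℂ) * v) • ∑ i ∈ range (L / 2),
      bondCorrelatedHop a ((2 * i : ℕ) : ZMod L) (((2 * i : ℕ) : ZMod L) + 1) := by
  rw [FH3_eq, FH1_eq, smul_lie, lie_smul, smul_smul, sum_lie_sum_of_lie_eq_zero]
  · exact congrArg _ (Finset.sum_congr rfl fun i hi =>
      bondInteraction_lie_bondHop ha (natCast_two_mul_ne_add_one (mem_range.mp hi)))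
  · intro i hi j hj hji
    exact lie_eq_zero_of_disjoint_sites ha
      (disjoint_evenBonds (mem_range.mp hi) (mem_range.mp hj) hji)
      (bondInteraction_mem_bilinearSubring (by simp) (by simp))
      (bondHop_mem_bilinearSubring (by simp) (by simp))

theorem FH3_lie_FH3_lie_FH1 (u v : ℝ) :
    ⁅FH3 a u, ⁅FH3 a u, FH1 a v⁆⁆
      = ((v : ℂ) * (u : ℂ) ^ 2) • ∑ i ∈ range (L / 2), ∑ σ : Bool,
          hop a ((2 * i : ℕ) : ZMod L) (((2 * i : ℕ) : ZMod L) + 1) σ *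
            (num a ((2 * i : ℕ) : ZMod L) (!σ) - num a (((2 * i : ℕ) : ZMod L) + 1) (!σ)) ^ 2 := by
  rw [FH3_lie_FH1 ha, FH3_eq, smul_lie, lie_smul, smul_smul, sum_lie_sum_of_lie_eq_zero]
  · rw [show (u : ℂ) * (u * v) = v * u ^ 2 by ring]
    exact congrArg _ (Finset.sum_congr rfl fun i hi =>
      bondInteraction_lie_bondCorrelatedHop ha (natCast_two_mul_ne_add_one (mem_range.mp hi)))
  · intro i hi j hj hji
    exact lie_eq_zero_of_disjoint_sites ha
      (disjoint_evenBonds (mem_range.mp hi) (mem_range.mp hj) hji)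
      (bondInteraction_mem_bilinearSubring (by simp) (by simp))
      (bondCorrelatedHop_mem_bilinearSubring (by simp) (by simp))

theorem FH2_lie_FH3_lie_FH1 (hL : Even L) (hL4 : 4 ≤ L) (u v : ℝ) :
    ⁅FH2 a v, ⁅FH3 a u, FH1 a v⁆⁆
      = ((v : ℂ) ^ 2 * (u : ℂ)) • ∑ i ∈ range (L / 2), ∑ σ : Bool,
          ((hop a (((2 * i : ℕ) : ZMod L) - 1) (((2 * i : ℕ) : ZMod L) + 1) σ -
              hop a ((2 * i : ℕ) : ZMod L) (((2 * i : ℕ) : ZMod L) + 2) σ) *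
            (num a ((2 * i : ℕ) : ZMod L) (!σ) - num a (((2 * i : ℕ) : ZMod L) + 1) (!σ)) +
          shop a (((2 * i : ℕ) : ZMod L) - 1) ((2 * i : ℕ) : ZMod L) σ *
            shop a ((2 * i : ℕ) : ZMod L) (((2 * i : ℕ) : ZMod L) + 1) (!σ) +
          shop a ((2 * i : ℕ) : ZMod L) (((2 * i : ℕ) : ZMod L) + 1) σ *
            shop a (((2 * i : ℕ) : ZMod L) + 1) (((2 * i : ℕ) : ZMod L) + 2) (!σ)) := by
  rw [FH3_lie_FH1 ha, FH2_eq, smul_lie, lie_smul, smul_smul,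
    sum_lie_sum_of_lie_eq_zero_of_ne_next (next := fun i => (i + 1) % (L / 2))]
  · rw [show (v : ℂ) * (u * v) = v ^ 2 * u by ring]
    refine congrArg _ (Finset.sum_congr rfl fun i hi => ?_)
    rw [natCast_two_mul_succ_mod hL i (mem_range.mp hi),
      show ((2 * i : ℕ) : ZMod L) + 2 - 1 = ((2 * i : ℕ) : ZMod L) + 1 by ring]
    exact bondHop_neighbours_lie_bondCorrelatedHop ha hL4 _
  · intro i hi
    have hi := mem_range.mp hi
    exact ⟨mem_range.mpr (Nat.mod_lt _ (by omega)), succ_mod_ne_self (by omega) hi⟩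
  · intro i hi j hj hji hj_next
    exact lie_eq_zero_of_disjoint_sites ha
      (disjoint_oddBond_evenBond hL (mem_range.mp hi) (mem_range.mp hj) hji hj_next)
      (bondHop_mem_bilinearSubring (by simp) (by simp))
      (bondCorrelatedHop_mem_bilinearSubring (by simp) (by simp))

end FermiHubbard

end

/-- **Nested commutators `[H₂,[H₃,H₁]]` and `[H₃,[H₃,H₁]]` for the 1D Fermi-Hubbard
Hamiltonian** (with `σ̄` the flipped spin):
`[H₂,[H₃,H₁]] = v²u Σ_{i∈Λ'} Σ_σ ((h_{i−1,i+1,σ} − h_{i,i+2,σ})·(n_{i,σ̄} − n_{i+1,σ̄})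
+ h̃_{i−1,i,σ}·h̃_{i,i+1,σ̄} + h̃_{i,i+1,σ}·h̃_{i+1,i+2,σ̄})` and
`[H₃,[H₃,H₁]] = vu² Σ_{i∈Λ'} Σ_σ h_{i,i+1,σ}·(n_{i,σ̄} − n_{i+1,σ̄})²`. -/
theorem nested_comm_FH2_FH3_FH1_and_FH3_FH3_FH1
    {E : Type*} [NormedAddCommGroup E] [InnerProductSpace ℂ E] [CompleteSpace E]
    {L : ℕ} (hL : Even L) (hL6 : 6 ≤ L)
    (a : ZMod L → Bool → E →L[ℂ] E)
    (car1 : ∀ (i j : ZMod L) (σ τ : Bool), a i σ * a j τ + a j τ * a i σ = 0)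
    (car2 : ∀ (i j : ZMod L) (σ τ : Bool),
      a i σ * star (a j τ) + star (a j τ) * a i σ = if i = j ∧ σ = τ then 1 else 0)
    (v u : ℝ) :
    ⁅FH2 a v, ⁅FH3 a u, FH1 a v⁆⁆
      = ((v : ℂ) ^ 2 * (u : ℂ)) • ∑ i ∈ Finset.range (L / 2), ∑ σ : Bool,
          ((hop a (((2 * i : ℕ) : ZMod L) - 1) (((2 * i : ℕ) : ZMod L) + 1) σ -
              hop a ((2 * i : ℕ) : ZMod L) (((2 * i : ℕ) : ZMod L) + 2) σ) *
            (num a ((2 * i : ℕ) : ZMod L) (!σ) - num a (((2 * i : ℕ) : ZMod L) + 1) (!σ)) +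
          shop a (((2 * i : ℕ) : ZMod L) - 1) ((2 * i : ℕ) : ZMod L) σ *
            shop a ((2 * i : ℕ) : ZMod L) (((2 * i : ℕ) : ZMod L) + 1) (!σ) +
          shop a ((2 * i : ℕ) : ZMod L) (((2 * i : ℕ) : ZMod L) + 1) σ *
            shop a (((2 * i : ℕ) : ZMod L) + 1) (((2 * i : ℕ) : ZMod L) + 2) (!σ)) ∧
    ⁅FH3 a u, ⁅FH3 a u, FH1 a v⁆⁆
      = ((v : ℂ) * (u : ℂ) ^ 2) • ∑ i ∈ Finset.range (L / 2), ∑ σ : Bool,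
          hop a ((2 * i : ℕ) : ZMod L) (((2 * i : ℕ) : ZMod L) + 1) σ *
            (num a ((2 * i : ℕ) : ZMod L) (!σ) - num a (((2 * i : ℕ) : ZMod L) + 1) (!σ)) ^ 2 := by
  have ha : IsCAR (uncurry a) := isCAR_uncurry car1 car2
  exact ⟨FH2_lie_FH3_lie_FH1 ha hL (by omega) u v, FH3_lie_FH3_lie_FH1 ha u v⟩
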